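/- Let β, β̂ : Fin n → ℝ, define v_{ii} = Σ_{j≠i} f(β_i+β_j) and v̂_{ii} = Σ_{j≠i} f(β̂_i+β̂_j) where f(x) = e^x/(1+e^x)^2. If max_i |β̂_i - β_i| ≤ ε, then |v̂_{ii} - v_{ii}| ≤ 2(n-1)ε/(6√3) for every i. -/

import Mathlib

open Real Finset

open scoped NNReal

/-!
The summand `f = exp x / (1 + exp x) ^ 2` is `σ (1 - σ)` for the logistic sigmoid `σ`, so
`f' = σ (1 - σ) (1 - 2 σ)`, which is bounded by `1 / (6 √3)` on `0 ≤ σ ≤ 1`. Hence `f` is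
`1 / (6 √3)`-Lipschitz, and each of the `n - 1` summands moves by at most `2 ε / (6 √3)` since
`|(β̂ᵢ + β̂ⱼ) - (βᵢ + βⱼ)| ≤ 2 ε`.
-/

lemma sigmoid_mul_one_sub_sigmoid (x : ℝ) :
    sigmoid x * (1 - sigmoid x) = exp x / (1 + exp x) ^ 2 := by
  rw [← sigmoid_neg, sigmoid_def, sigmoid_def, neg_neg, exp_neg]
  field_simp
  ring

/-- With `u = 1 - 2 s` the expression is `u (1 - u²) / 4`, and for `c = 1 / √3`,
`u³ - u + 2 c³ = (u - c)² (u + 2 c) ≥ 0` when `u ≥ -1`. -/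
lemma abs_mul_one_sub_mul_one_sub_two_mul_le {s : ℝ} (hs₀ : 0 ≤ s) (hs₁ : s ≤ 1) :
    |s * (1 - s) * (1 - 2 * s)| ≤ (6 * √3)⁻¹ := by
  have h3 : √3 ^ 2 = 3 := sq_sqrt (by norm_num)
  have hinv : (6 * √3)⁻¹ = √3 / 18 := by
    field_simp
    linarith
  have h3_lower : 3 / 2 ≤ √3 := by nlinarith [sqrt_nonneg 3]
  rw [hinv, abs_le]
  constructor
  · nlinarith [mul_nonneg (sq_nonneg (3 * (2 * s - 1) - √3))
      (by linarith : 0 ≤ 3 * (2 * s - 1) + 2 * √3)]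
  · nlinarith [mul_nonneg (sq_nonneg (3 * (1 - 2 * s) - √3))
      (by linarith : 0 ≤ 3 * (1 - 2 * s) + 2 * √3)]

lemma hasDerivAt_sigmoid_mul_one_sub_sigmoid (x : ℝ) :
    HasDerivAt (fun x => sigmoid x * (1 - sigmoid x))
      (sigmoid x * (1 - sigmoid x) * (1 - 2 * sigmoid x)) x := by
  refine ((hasDerivAt_sigmoid x).fun_mul ((hasDerivAt_sigmoid x).const_sub 1)).congr_deriv ?_
  ring

lemma lipschitzWith_sigmoid_mul_one_sub_sigmoid :
    LipschitzWith (6 * NNReal.sqrt 3)⁻¹ (fun x => sigmoid x * (1 - sigmoid x)) := by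
  refine lipschitzWith_of_nnnorm_deriv_le
    (fun x => (hasDerivAt_sigmoid_mul_one_sub_sigmoid x).differentiableAt) fun x => ?_
  rw [(hasDerivAt_sigmoid_mul_one_sub_sigmoid x).deriv, ← NNReal.coe_le_coe, coe_nnnorm]
  push_cast
  exact abs_mul_one_sub_mul_one_sub_two_mul_le (sigmoid_nonneg x) (sigmoid_le_one x)

lemma LipschitzWith.abs_sum_comp_sub_sum_comp_le {ι : Type*} {g : ℝ → ℝ} {K : ℝ≥0}
    (hg : LipschitzWith K g) (s : Finset ι) {x y : ι → ℝ} {δ : ℝ}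
    (hxy : ∀ j ∈ s, |x j - y j| ≤ δ) :
    |∑ j ∈ s, g (x j) - ∑ j ∈ s, g (y j)| ≤ #s * (K * δ) := by
  rw [← sum_sub_distrib]
  refine (abs_sum_le_sum_abs _ _).trans ?_
  rw [← nsmul_eq_mul]
  refine sum_le_card_nsmul _ _ _ fun j hj => ?_
  calc |g (x j) - g (y j)| = dist (g (x j)) (g (y j)) := (Real.dist_eq _ _).symm
    _ ≤ K * dist (x j) (y j) := hg.dist_le_mul _ _
    _ ≤ K * δ := by rw [Real.dist_eq]; exact mul_le_mul_of_nonneg_left (hxy j hj) K.2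

theorem fisher_diag_estimate_error_general (n : ℕ) (ε : ℝ)
    (β βhat : Fin n → ℝ) (hβ : ∀ i, |βhat i - β i| ≤ ε) (i : Fin n) :
    |∑ j ∈ Finset.univ.erase i, exp (βhat i + βhat j) / (1 + exp (βhat i + βhat j)) ^ 2
        - ∑ j ∈ Finset.univ.erase i, exp (β i + β j) / (1 + exp (β i + β j)) ^ 2|
      ≤ 2 * (n - 1 : ℝ) * ε / (6 * Real.sqrt 3) := by
  have hpair : ∀ j ∈ univ.erase i, |(βhat i + βhat j) - (β i + β j)| ≤ 2 * ε := fun j _ =>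
    calc |(βhat i + βhat j) - (β i + β j)| = |(βhat i - β i) + (βhat j - β j)| := by ring_nf
      _ ≤ |βhat i - β i| + |βhat j - β j| := abs_add_le _ _
      _ ≤ 2 * ε := by linarith [hβ i, hβ j]
  have hcard : (#(univ.erase i) : ℝ) = n - 1 := by
    rw [card_erase_of_mem (mem_univ i), card_univ, Fintype.card_fin, Nat.cast_pred i.pos]
  have hsum := lipschitzWith_sigmoid_mul_one_sub_sigmoid.abs_sum_comp_sub_sum_comp_le _ hpair
  simp only [sigmoid_mul_one_sub_sigmoid, hcard] at hsum
  convert hsum using 1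
  push_cast
  ring

theorem fisher_diag_estimate_error (n : ℕ) (hn : 2 ≤ n) (ε : ℝ)
    (β βhat : Fin n → ℝ) (hβ : ∀ i, |βhat i - β i| ≤ ε) (i : Fin n) :
    |∑ j ∈ Finset.univ.erase i, exp (βhat i + βhat j) / (1 + exp (βhat i + βhat j)) ^ 2
        - ∑ j ∈ Finset.univ.erase i, exp (β i + β j) / (1 + exp (β i + β j)) ^ 2|
      ≤ 2 * (n - 1 : ℝ) * ε / (6 * Real.sqrt 3) :=
  fisher_diag_estimate_error_general n ε β βhat hβ i
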